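/- arXiv:math/0002196 — 2 statements merged into one kernel-verified Lean document; each statement's English description precedes it below -/
import Mathlib

section
/- For every ε > 0, every K > 0, and every function r : ℕ → ℝ with r(0) ≥ K² ε, there exists a smooth strictly increasing function φ : [K, ∞) → ℝ whose graph has Euclidean curvature at most ε at every point and which satisfies φ(K + n) ≥ r(n) for every natural number n. -/
noncomputable section
namespace Stmt11Aux

open Real

/-- base slope -/
def bet (ε : ℝ) : ℝ := 12 + 12 / Real.sqrt ε

lemma bet_ge_12 (ε : ℝ) : 12 ≤ bet ε := by
  have : 0 ≤ 12 / Real.sqrt ε := by positivity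
  unfold bet; linarith

lemma bet_pos (ε : ℝ) : 0 < bet ε := lt_of_lt_of_le (by norm_num) (bet_ge_12 ε)

lemma eps_bet_sq (ε : ℝ) (hε : 0 < ε) : 144 ≤ ε * bet ε ^ 2 := by
  have hs : 0 < Real.sqrt ε := Real.sqrt_pos.mpr hε
  have h1 : 12 / Real.sqrt ε ≤ bet ε := by unfold bet; linarith
  have h2 : (12 / Real.sqrt ε) ^ 2 ≤ bet ε ^ 2 := by
    apply pow_le_pow_left₀ (by positivity) h1
  have h3 : (12 / Real.sqrt ε) ^ 2 = 144 / ε := by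
    rw [div_pow, Real.sq_sqrt hε.le]; norm_num
  rw [h3] at h2
  calc (144:ℝ) = ε * (144 / ε) := by field_simp
  _ ≤ ε * bet ε ^ 2 := by apply mul_le_mul_of_nonneg_left h2 hε.le

/-- the base rate -/
def Lc (ε : ℝ) : ℝ := ε * bet ε ^ 2 / 16

lemma Lc_ge_9 (ε : ℝ) (hε : 0 < ε) : 9 ≤ Lc ε := by
  have := eps_bet_sq ε hε; unfold Lc; linarith

/-- rates -/
def lam (ε : ℝ) (j : ℕ) : ℝ := Lc ε * 4 ^ j

/-- levels -/
def Nj (ε : ℝ) (j : ℕ) : ℝ := bet ε * 2 ^ j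

lemma lam_ge (ε : ℝ) (hε : 0 < ε) (j : ℕ) : 9 * 4 ^ j ≤ lam ε j := by
  unfold lam
  have h4 : (0:ℝ) < 4 ^ j := by positivity
  nlinarith [Lc_ge_9 ε hε]

lemma lam_ge_9 (ε : ℝ) (hε : 0 < ε) (j : ℕ) : 9 ≤ lam ε j := by
  have := lam_ge ε hε j
  have : (9:ℝ) * 1 ≤ 9 * 4 ^ j := by
    have : (1:ℝ) ≤ 4 ^ j := one_le_pow₀ (by norm_num)
    nlinarith
  linarith [lam_ge ε hε j]

lemma lam_pos (ε : ℝ) (hε : 0 < ε) (j : ℕ) : 0 < lam ε j :=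
  lt_of_lt_of_le (by norm_num) (lam_ge_9 ε hε j)

lemma Nj_pos (ε : ℝ) (j : ℕ) : 0 < Nj ε j := by
  unfold Nj
  have := bet_pos ε
  positivity

lemma j0_exists (ε : ℝ) (r : ℕ → ℝ) (n : ℕ) : ∃ j : ℕ, |r n| ≤ bet ε * 2 ^ j := by
  obtain ⟨j, hj⟩ := pow_unbounded_of_one_lt (|r n|) (one_lt_two (α := ℝ))
  refine ⟨j, hj.le.trans ?_⟩
  have h2 : (0:ℝ) ≤ 2 ^ j := by positivity
  nlinarith [bet_ge_12 ε]

/-- index of the first level exceeding `|r n|` -/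
def j0 (ε : ℝ) (r : ℕ → ℝ) (n : ℕ) : ℕ := Nat.find (j0_exists ε r n)

/-- strictly monotone deadline sequence -/
def Q (ε : ℝ) (r : ℕ → ℝ) : ℕ → ℕ
  | 0 => j0 ε r 0
  | n + 1 => max (Q ε r n + 1) (j0 ε r (n + 1))

lemma Q_strictMono (ε : ℝ) (r : ℕ → ℝ) : StrictMono (Q ε r) :=
  strictMono_nat_of_lt_succ (fun n => lt_of_lt_of_le (Nat.lt_succ_self _) (le_max_left _ _))

lemma Q_ge_j0 (ε : ℝ) (r : ℕ → ℝ) (n : ℕ) : j0 ε r n ≤ Q ε r n := by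
  cases n with
  | zero => exact le_refl _
  | succ m => exact le_max_right _ _

lemma le_Q (ε : ℝ) (r : ℕ → ℝ) (n : ℕ) : n ≤ Q ε r n := (Q_strictMono ε r).le_apply

lemma abs_r_le_N_Q (ε : ℝ) (r : ℕ → ℝ) (n : ℕ) : |r n| ≤ Nj ε (Q ε r n) := by
  have h1 : |r n| ≤ bet ε * 2 ^ (j0 ε r n) := Nat.find_spec (j0_exists ε r n)
  refine h1.trans ?_
  unfold Nj
  have : (2:ℝ) ^ (j0 ε r n) ≤ 2 ^ (Q ε r n) :=
    pow_le_pow_right₀ (by norm_num) (Q_ge_j0 ε r n)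
  nlinarith [bet_pos ε]

/-- number of deadlines strictly before step `j` -/
def cc (ε : ℝ) (r : ℕ → ℝ) (j : ℕ) : ℕ :=
  ((Finset.Icc 1 j).filter (fun n => Q ε r n < j)).card

lemma cc_mono (ε : ℝ) (r : ℕ → ℝ) : Monotone (cc ε r) := by
  intro i j hij
  apply Finset.card_le_card
  intro n hn
  simp only [Finset.mem_filter, Finset.mem_Icc] at *
  exact ⟨⟨hn.1.1, hn.1.2.trans hij⟩, lt_of_lt_of_le hn.2 hij⟩

lemma cc_Q (ε : ℝ) (r : ℕ → ℝ) (n : ℕ) (hn : 1 ≤ n) : cc ε r (Q ε r n) = n - 1 := by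
  unfold cc
  have : (Finset.Icc 1 (Q ε r n)).filter (fun m => Q ε r m < Q ε r n) = Finset.Icc 1 (n-1) := by
    ext m
    simp only [Finset.mem_filter, Finset.mem_Icc]
    constructor
    · rintro ⟨⟨h1, _⟩, h2⟩
      have := (Q_strictMono ε r).lt_iff_lt.mp h2
      omega
    · rintro ⟨h1, h2⟩
      have hmn : m < n := by omega
      refine ⟨⟨h1, ?_⟩, (Q_strictMono ε r).lt_iff_lt.mpr hmn⟩
      exact le_trans (le_Q ε r m) (le_of_lt ((Q_strictMono ε r).lt_iff_lt.mpr hmn))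
  rw [this, Nat.card_Icc]
  omega

lemma cc_large (ε : ℝ) (r : ℕ → ℝ) (n₀ j : ℕ) (h : Q ε r n₀ < j) : n₀ ≤ cc ε r j := by
  unfold cc
  have hsub : Finset.Icc 1 n₀ ⊆ (Finset.Icc 1 j).filter (fun n => Q ε r n < j) := by
    intro m hm
    simp only [Finset.mem_filter, Finset.mem_Icc] at *
    have hQm : Q ε r m ≤ Q ε r n₀ := (Q_strictMono ε r).monotone hm.2
    have hmj : m ≤ j := le_trans (le_trans (le_Q ε r m) hQm) h.le
    exact ⟨⟨hm.1, hmj⟩, lt_of_le_of_lt hQm h⟩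
  calc n₀ = (Finset.Icc 1 n₀).card := by rw [Nat.card_Icc]; omega
  _ ≤ _ := Finset.card_le_card hsub

/-- the minimal gaps -/
def del (ε : ℝ) (j : ℕ) : ℝ := 5 * j * Real.log 2 / lam ε j

lemma del_nonneg (ε : ℝ) (hε : 0 < ε) (j : ℕ) : 0 ≤ del ε j := by
  unfold del
  have := lam_pos ε hε j
  have := Real.log_pos (by norm_num : (1:ℝ) < 2)
  positivity

/-- cumulative minimal gaps -/
def Dsum (ε : ℝ) (j : ℕ) : ℝ := ∑ i ∈ Finset.range (j+1), del ε i

lemma two_mul_le_pow (i : ℕ) : 2*i ≤ 2^i := by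
  induction i with
  | zero => simp
  | succ n ih =>
    rcases Nat.eq_zero_or_pos n with h | h
    · subst h; norm_num
    · have h1 : 1 < 2^n := Nat.one_lt_two_pow_iff.mpr (by omega)
      have h2 : 2^(n+1) = 2*2^n := by rw [pow_succ]; ring
      omega

lemma aux_i_quarter (i : ℕ) : (i:ℝ) * (1/4)^i ≤ (1/2) * (1/2)^i := by
  have hp : (0:ℝ) < 2^i := by positivity
  have hnat : (2*(i:ℝ)) ≤ 2^i := by
    have := two_mul_le_pow i
    exact_mod_cast this
  have key : (i:ℝ) * (1/2)^i ≤ 1/2 := by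
    rw [one_div, inv_pow, mul_inv_le_iff₀ hp]
    linarith
  have e : ((1:ℝ)/4)^i = (1/2)^i * (1/2)^i := by
    rw [← mul_pow]; norm_num
  calc (i:ℝ) * (1/4)^i = ((i:ℝ) * (1/2)^i) * (1/2)^i := by rw [e]; ring
  _ ≤ (1/2) * (1/2)^i := by
      apply mul_le_mul_of_nonneg_right key (by positivity)

lemma Dsum_le_half (ε : ℝ) (hε : 0 < ε) (j : ℕ) : Dsum ε j ≤ 1/2 := by
  have hL := Lc_ge_9 ε hε
  have hLpos : 0 < Lc ε := by linarith
  have hlog : Real.log 2 ≤ 0.6931471808 := Real.log_two_lt_d9.le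
  have hlogpos : 0 < Real.log 2 := Real.log_pos (by norm_num)
  have hterm : ∀ i, del ε i ≤ (5 * Real.log 2 / Lc ε) * ((1/2) * (1/2)^i) := by
    intro i
    unfold del lam
    rw [div_le_iff₀ (by positivity)]
    have h1 : (i:ℝ) * (1/4)^i ≤ (1/2) * (1/2)^i := aux_i_quarter i
    have h4 : ((1:ℝ)/4)^i = ((4:ℝ)^i)⁻¹ := by
      rw [one_div, inv_pow]
    have : (5 * Real.log 2) * ((i:ℝ) * (1/4)^i) ≤ (5 * Real.log 2) * ((1/2) * (1/2)^i) := by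
      nlinarith
    calc 5 * (i:ℝ) * Real.log 2 = ((5 * Real.log 2) * ((i:ℝ) * (1/4)^i)) * (4:ℝ)^i := by
          rw [h4]; field_simp
    _ ≤ ((5 * Real.log 2) * ((1/2) * (1/2)^i)) * (4:ℝ)^i := by
          have h4p : (0:ℝ) < 4^i := by positivity
          nlinarith
    _ = 5 * Real.log 2 / Lc ε * (1 / 2 * (1 / 2) ^ i) * (Lc ε * 4 ^ i) := by
          field_simp
  have hsum : Dsum ε j ≤ (5 * Real.log 2 / Lc ε) * ∑ i ∈ Finset.range (j+1), ((1/2) * (1/2)^i) := by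
    unfold Dsum
    rw [Finset.mul_sum]
    exact Finset.sum_le_sum (fun i _ => hterm i)
  have hgeo : ∑ i ∈ Finset.range (j+1), ((1/2:ℝ) * (1/2)^i) ≤ 1 := by
    have he : ∑ i ∈ Finset.range (j+1), ((1/2:ℝ) * (1/2)^i)
        = (1/2) * ∑ i ∈ Finset.range (j+1), ((1/2:ℝ))^i := by
      rw [Finset.mul_sum]
    have h2 : ∑ i ∈ Finset.range (j+1), ((1/2:ℝ))^i ≤ 2 := by
      have h := Summable.sum_le_tsum (Finset.range (j+1)) (fun i _ => by positivity)
        (summable_geometric_two)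
      rw [tsum_geometric_two] at h
      exact h
    rw [he]; linarith
  have h59 : 5 * Real.log 2 / Lc ε ≤ 2/5 := by
    rw [div_le_iff₀ hLpos]
    nlinarith [hlog, hL]
  calc Dsum ε j ≤ (5 * Real.log 2 / Lc ε) * ∑ i ∈ Finset.range (j+1), ((1/2) * (1/2)^i) := hsum
  _ ≤ (2/5) * 1 := by
      have hS0 : (0:ℝ) ≤ ∑ i ∈ Finset.range (j+1), ((1/2) * (1/2)^i) :=
        Finset.sum_nonneg (fun i _ => by positivity)
      have ha0 : (0:ℝ) ≤ 5 * Real.log 2 / Lc ε := by positivity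
      exact mul_le_mul h59 hgeo hS0 (by norm_num)
  _ ≤ 1/2 := by norm_num

/-- step positions -/
def bb (ε K : ℝ) (r : ℕ → ℝ) (j : ℕ) : ℝ := K + Dsum ε j + (cc ε r j) / 2

lemma bb_ge_K (ε K : ℝ) (hε : 0 < ε) (r : ℕ → ℝ) (j : ℕ) : K ≤ bb ε K r j := by
  unfold bb Dsum
  have h1 : 0 ≤ ∑ i ∈ Finset.range (j+1), del ε i :=
    Finset.sum_nonneg (fun i _ => del_nonneg ε hε i)
  have h2 : (0:ℝ) ≤ (cc ε r j) / 2 := by positivity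
  linarith

lemma bb_zero (ε K : ℝ) (r : ℕ → ℝ) : bb ε K r 0 = K := by
  unfold bb Dsum cc del
  simp

lemma bb_gap (ε K : ℝ) (r : ℕ → ℝ) (j : ℕ) :
    bb ε K r j + del ε (j+1) ≤ bb ε K r (j+1) := by
  unfold bb
  have h1 : Dsum ε (j+1) = Dsum ε j + del ε (j+1) := by
    unfold Dsum
    rw [Finset.sum_range_succ]
  have h2 : (cc ε r j : ℝ) ≤ cc ε r (j+1) := by
    exact_mod_cast cc_mono ε r (Nat.le_succ j)
  linarith

lemma bb_deadline (ε K : ℝ) (hε : 0 < ε) (r : ℕ → ℝ) (n : ℕ) (hn : 1 ≤ n) :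
    bb ε K r (Q ε r n) ≤ K + n - 1/2 := by
  unfold bb
  rw [cc_Q ε r n hn]
  have h1 : Dsum ε (Q ε r n) ≤ 1/2 := Dsum_le_half ε hε _
  have h2 : ((n - 1 : ℕ) : ℝ) = (n:ℝ) - 1 := by
    have : (1:ℕ) ≤ n := hn
    push_cast [Nat.cast_sub this]
    ring
  rw [h2]
  have hn1 : (1:ℝ) ≤ (n:ℝ) := by exact_mod_cast hn
  linarith
lemma lam_mul_del (ε : ℝ) (hε : 0 < ε) (j : ℕ) :
    lam ε j * del ε j = 5 * j * Real.log 2 := by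
  unfold del
  field_simp [ne_of_gt (lam_pos ε hε j)]

lemma exp_neg_lam_del (ε : ℝ) (hε : 0 < ε) (j : ℕ) :
    Real.exp (-(lam ε j * del ε j)) = (1/2)^(5*j) := by
  rw [lam_mul_del ε hε j]
  have : 5 * (j:ℝ) * Real.log 2 = (5*j : ℕ) * Real.log 2 := by push_cast; ring
  rw [this]
  rw [show -(((5*j:ℕ):ℝ) * Real.log 2) = ((5*j:ℕ):ℝ) * (-Real.log 2) by ring]
  rw [Real.exp_nat_mul]
  congr 1
  rw [Real.exp_neg, Real.exp_log (by norm_num : (0:ℝ) < 2)]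
  norm_num

lemma mu_identity (ε : ℝ) (j : ℕ) :
    lam ε j * Nj ε j * (1/2:ℝ)^(5*j) = (ε * bet ε^3 / 16) * (1/4)^j := by
  unfold lam Nj Lc
  have h4 : (4:ℝ)^j = 2^(2*j) := by
    rw [show (4:ℝ) = 2^2 by norm_num, ← pow_mul]
  have h14 : ((1:ℝ)/4)^j = ((2:ℝ)^(2*j))⁻¹ := by
    rw [one_div, inv_pow, show (4:ℝ) = 2^2 by norm_num, ← pow_mul]
  have h12 : ((1:ℝ)/2)^(5*j) = ((2:ℝ)^(5*j))⁻¹ := by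
    rw [one_div, inv_pow]
  rw [h4, h14, h12]
  have h25 : (2:ℝ)^(5*j) = 2^(2*j) * 2^(2*j) * 2^j := by
    rw [← pow_add, ← pow_add]; congr 1; ring
  have h2j : (0:ℝ) < 2^j := by positivity
  have h22j : (0:ℝ) < 2^(2*j) := by positivity
  field_simp [h25]
  ring

/-- master summable bound -/
lemma summable_master (ε K : ℝ) (hε : 0 < ε) (r : ℕ → ℝ) (R : ℝ) :
    Summable (fun j => (1 + lam ε j)^2 * Nj ε j * Real.exp (lam ε j * (R - bb ε K r j))) := by
  set n₀ : ℕ := max 1 (Nat.ceil (2*(R+1-K))) with hn₀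
  set J : ℕ := Q ε r n₀ + 1 with hJ
  have hbb : ∀ j, J ≤ j → R + 1 ≤ bb ε K r j := by
    intro j hj
    have hcc : n₀ ≤ cc ε r j := cc_large ε r n₀ j (by omega)
    have h1 : 2*(R+1-K) ≤ (n₀ : ℝ) := by
      calc 2*(R+1-K) ≤ (Nat.ceil (2*(R+1-K)) : ℝ) := Nat.le_ceil _
      _ ≤ (n₀:ℝ) := by exact_mod_cast Nat.le_max_right _ _
    have h2 : (n₀:ℝ) ≤ cc ε r j := by exact_mod_cast hcc
    have h3 : 0 ≤ Dsum ε j := Finset.sum_nonneg (fun i _ => del_nonneg ε hε i)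
    unfold bb
    linarith
  rw [← summable_nat_add_iff J]
  have hb : ∀ (i : ℕ),
      (1 + lam ε (i+J))^2 * Nj ε (i+J) * Real.exp (lam ε (i+J) * (R - bb ε K r (i+J)))
        ≤ (64 * bet ε) * (1/2)^i := by
    intro i
    set j := i + J with hj'
    have hlam9 := lam_ge_9 ε hε j
    have hlam := lam_ge ε hε j
    have hlpos := lam_pos ε hε j
    have hRb : R - bb ε K r j ≤ -1 := by
      have := hbb j (by omega)
      linarith
    have hexp : Real.exp (lam ε j * (R - bb ε K r j)) ≤ Real.exp (-(lam ε j)) := by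
      apply Real.exp_le_exp.mpr
      nlinarith
    have h1 : (1 + lam ε j)^2 ≤ 4 * (lam ε j)^2 := by nlinarith
    have h2 : (lam ε j)^2 * Real.exp (-(lam ε j/2)) ≤ 16 := by
      have he : lam ε j / 4 ≤ Real.exp (lam ε j / 4) := by
        linarith [Real.add_one_le_exp (lam ε j / 4)]
      have hsq : (lam ε j / 4)^2 ≤ (Real.exp (lam ε j / 4))^2 := by
        apply pow_le_pow_left₀ (by linarith) he
      rw [← Real.exp_nat_mul] at hsq
      have hee : Real.exp ((2:ℕ) * (lam ε j / 4)) = Real.exp (lam ε j / 2) := by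
        congr 1; push_cast; ring
      rw [hee] at hsq
      have hexp_pos : (0:ℝ) < Real.exp (lam ε j / 2) := Real.exp_pos _
      rw [Real.exp_neg]
      rw [mul_inv_le_iff₀ hexp_pos]
      nlinarith
    have h3 : Nj ε j * Real.exp (-(lam ε j/2)) ≤ bet ε * (1/2)^j := by
      have he : lam ε j / 2 ≤ Real.exp (lam ε j / 2) := by
        linarith [Real.add_one_le_exp (lam ε j / 2)]
      have h4j : (4:ℝ)^j ≤ Real.exp (lam ε j / 2) := by
        have : (4:ℝ)^j ≤ lam ε j / 2 := by nlinarith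
        linarith
      have h4pos : (0:ℝ) < (4:ℝ)^j := by positivity
      have hle : Real.exp (-(lam ε j/2)) ≤ ((4:ℝ)^j)⁻¹ := by
        rw [Real.exp_neg]
        apply inv_anti₀ h4pos h4j
      unfold Nj
      have hbp := bet_pos ε
      have h2pos : (0:ℝ) < 2^j := by positivity
      have : (2:ℝ)^j * ((4:ℝ)^j)⁻¹ = (1/2)^j := by
        have h44 : (4:ℝ)^j = 2^j * 2^j := by
          rw [show (4:ℝ)=2*2 by norm_num, mul_pow]
        rw [h44, one_div, inv_pow, mul_inv, ← mul_assoc,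
          mul_inv_cancel₀ (ne_of_gt h2pos), one_mul]
      calc bet ε * 2^j * Real.exp (-(lam ε j/2)) ≤ bet ε * 2^j * ((4:ℝ)^j)⁻¹ := by
            apply mul_le_mul_of_nonneg_left hle (by positivity)
      _ = bet ε * (1/2)^j := by rw [mul_assoc, this]
    have hsplit : Real.exp (-(lam ε j)) =
        Real.exp (-(lam ε j/2)) * Real.exp (-(lam ε j/2)) := by
      rw [← Real.exp_add]; congr 1; ring
    have hNpos := Nj_pos ε j
    have hexp2 : (0:ℝ) ≤ Real.exp (-(lam ε j/2)) := (Real.exp_pos _).le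
    calc (1 + lam ε j)^2 * Nj ε j * Real.exp (lam ε j * (R - bb ε K r j))
        ≤ (1 + lam ε j)^2 * Nj ε j * Real.exp (-(lam ε j)) := by
          apply mul_le_mul_of_nonneg_left hexp (by positivity)
    _ = ((1 + lam ε j)^2 * Real.exp (-(lam ε j/2))) * (Nj ε j * Real.exp (-(lam ε j/2))) := by
          rw [hsplit]; ring
    _ ≤ (4 * 16) * (bet ε * (1/2)^j) := by
          have hA : (1 + lam ε j)^2 * Real.exp (-(lam ε j/2)) ≤ 4*16 := by nlinarith
          have hApos : 0 ≤ (1 + lam ε j)^2 * Real.exp (-(lam ε j/2)) := by positivity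
          have hBpos : 0 ≤ Nj ε j * Real.exp (-(lam ε j/2)) := by positivity
          have hB := h3
          nlinarith
    _ = (64 * bet ε) * (1/2)^j := by ring
    _ ≤ (64 * bet ε) * (1/2)^i := by
          have hbp := bet_pos ε
          have : ((1:ℝ)/2)^j ≤ (1/2)^i := by
            apply pow_le_pow_of_le_one (by norm_num) (by norm_num) (by omega)
          nlinarith
  apply Summable.of_nonneg_of_le _ hb
  · exact (summable_geometric_two).mul_left _
  · intro i
    have := Nj_pos ε (i+J)
    positivity

lemma summable_of_le_master (ε K : ℝ) (hε : 0 < ε) (r : ℕ → ℝ) (R : ℝ) (g : ℕ → ℝ)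
    (h0 : ∀ j, 0 ≤ g j)
    (hle : ∀ j, g j ≤ (1 + lam ε j)^2 * Nj ε j * Real.exp (lam ε j * (R - bb ε K r j))) :
    Summable g :=
  Summable.of_nonneg_of_le h0 hle (summable_master ε K hε r R)

lemma one_le_sq_one_add (x : ℝ) (hx : 0 ≤ x) : 1 ≤ (1+x)^2 := by nlinarith

lemma summable_T (ε K : ℝ) (hε : 0 < ε) (r : ℕ → ℝ) (x : ℝ) :
    Summable (fun j => Nj ε j * Real.exp (lam ε j * (x - bb ε K r j))) := by
  apply summable_of_le_master ε K hε r x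
  · intro j
    have := Nj_pos ε j
    positivity
  · intro j
    have h1 := one_le_sq_one_add (lam ε j) (lam_pos ε hε j).le
    have h2 : (0:ℝ) < Nj ε j * Real.exp (lam ε j * (x - bb ε K r j)) := by
      have := Nj_pos ε j; positivity
    nlinarith

lemma summable_lamT (ε K : ℝ) (hε : 0 < ε) (r : ℕ → ℝ) (x : ℝ) :
    Summable (fun j => lam ε j * (Nj ε j * Real.exp (lam ε j * (x - bb ε K r j)))) := by
  apply summable_of_le_master ε K hε r x
  · intro j
    have := lam_pos ε hε j
    have := Nj_pos ε j
    positivity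
  · intro j
    have h1 : lam ε j ≤ (1 + lam ε j)^2 := by nlinarith [lam_pos ε hε j]
    have h2 : (0:ℝ) < Nj ε j * Real.exp (lam ε j * (x - bb ε K r j)) := by
      have := Nj_pos ε j; positivity
    nlinarith
/-- the terms of the slope series -/
def Tj (ε K : ℝ) (r : ℕ → ℝ) (j : ℕ) (x : ℝ) : ℝ :=
  Nj ε j * Real.exp (lam ε j * (x - bb ε K r j))

/-- the slope function -/
def psi (ε K : ℝ) (r : ℕ → ℝ) (x : ℝ) : ℝ := bet ε + ∑' j, Tj ε K r j x

/-- the derivative of the slope function -/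
def psi' (ε K : ℝ) (r : ℕ → ℝ) (x : ℝ) : ℝ := ∑' j, lam ε j * Tj ε K r j x

def mu (ε : ℝ) (j : ℕ) : ℝ := (ε * bet ε^3 / 16) * (1/4)^j

lemma Tj_pos (ε K : ℝ) (hε : 0 < ε) (r : ℕ → ℝ) (j : ℕ) (x : ℝ) : 0 < Tj ε K r j x := by
  unfold Tj
  have := Nj_pos ε j
  positivity

lemma summable_Tj (ε K : ℝ) (hε : 0 < ε) (r : ℕ → ℝ) (x : ℝ) :
    Summable (fun j => Tj ε K r j x) := summable_T ε K hε r x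

lemma psi_ge_bet (ε K : ℝ) (hε : 0 < ε) (r : ℕ → ℝ) (x : ℝ) : bet ε ≤ psi ε K r x := by
  unfold psi
  have : 0 ≤ ∑' j, Tj ε K r j x := tsum_nonneg (fun j => (Tj_pos ε K hε r j x).le)
  linarith

lemma psi_pos (ε K : ℝ) (hε : 0 < ε) (r : ℕ → ℝ) (x : ℝ) : 0 < psi ε K r x :=
  lt_of_lt_of_le (bet_pos ε) (psi_ge_bet ε K hε r x)

lemma psi_ge_T (ε K : ℝ) (hε : 0 < ε) (r : ℕ → ℝ) (j : ℕ) (x : ℝ) :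
    Tj ε K r j x ≤ psi ε K r x := by
  unfold psi
  have h1 : Tj ε K r j x ≤ ∑' i, Tj ε K r i x :=
    Summable.le_tsum (summable_Tj ε K hε r x) j (fun i _ => (Tj_pos ε K hε r i x).le)
  have := bet_pos ε
  linarith

lemma lam_succ (ε : ℝ) (j : ℕ) : lam ε (j+1) = (ε/4) * (Nj ε j)^2 := by
  unfold lam Nj Lc
  have h : ((2:ℝ)^j)^2 = 4^j := by
    rw [← pow_mul, show (4:ℝ) = 2^2 by norm_num, ← pow_mul]
    congr 1; ring
  rw [pow_succ, mul_pow, h]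
  ring

lemma perterm (ε K : ℝ) (hε : 0 < ε) (r : ℕ → ℝ) (x : ℝ) (j : ℕ) :
    lam ε j * Tj ε K r j x ≤ (ε/4) * (psi ε K r x)^2 * Tj ε K r j x + mu ε j := by
  have hTpos := Tj_pos ε K hε r j x
  have hmu : 0 ≤ mu ε j := by
    unfold mu
    have := bet_pos ε
    positivity
  cases j with
  | zero =>
    have hlam : lam ε 0 = ε * bet ε^2 / 16 := by unfold lam Lc; norm_num
    have hψ := psi_ge_bet ε K hε r x
    have hb := bet_pos ε
    have hsq : bet ε^2 ≤ (psi ε K r x)^2 := by nlinarith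
    have : lam ε 0 ≤ (ε/4) * (psi ε K r x)^2 := by rw [hlam]; nlinarith
    nlinarith
  | succ j =>
    by_cases hx : bb ε K r j ≤ x
    · -- in-zone : previous term has already reached its level
      have hTj : Nj ε j ≤ Tj ε K r j x := by
        unfold Tj
        have h1 : (1:ℝ) ≤ Real.exp (lam ε j * (x - bb ε K r j)) := by
          rw [← Real.exp_zero]
          apply Real.exp_le_exp.mpr
          have := (lam_pos ε hε j).le
          nlinarith
        nlinarith [Nj_pos ε j]
      have hψT := psi_ge_T ε K hε r j x
      have hNpos := Nj_pos ε j
      have hψpos := psi_pos ε K hε r x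
      have hsq : (Nj ε j)^2 ≤ (psi ε K r x)^2 := by nlinarith
      have hlam : lam ε (j+1) ≤ (ε/4) * (psi ε K r x)^2 := by
        rw [lam_succ]; nlinarith
      nlinarith
    · -- pre-zone : term is still microscopic
      push_neg at hx
      have hlpos := lam_pos ε hε (j+1)
      have hgap := bb_gap ε K r j
      have hdel := del_nonneg ε hε (j+1)
      have hT : Tj ε K r (j+1) x ≤ Nj ε (j+1) * Real.exp (-(lam ε (j+1) * del ε (j+1))) := by
        unfold Tj
        apply mul_le_mul_of_nonneg_left _ (Nj_pos ε (j+1)).le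
        apply Real.exp_le_exp.mpr
        have hxb : x - bb ε K r (j+1) ≤ -(del ε (j+1)) := by linarith
        nlinarith
      have hmuid : lam ε (j+1) * (Nj ε (j+1) * Real.exp (-(lam ε (j+1) * del ε (j+1))))
          = mu ε (j+1) := by
        rw [exp_neg_lam_del ε hε (j+1)]
        unfold mu
        rw [← mu_identity ε (j+1)]
        ring
      have h1 : lam ε (j+1) * Tj ε K r (j+1) x ≤ mu ε (j+1) := by
        rw [← hmuid]
        apply mul_le_mul_of_nonneg_left hT hlpos.le
      have h2 : 0 ≤ (ε/4) * (psi ε K r x)^2 * Tj ε K r (j+1) x := by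
        have := psi_pos ε K hε r x
        positivity
      linarith

lemma summable_mu (ε : ℝ) : Summable (fun j => mu ε j) := by
  unfold mu
  apply Summable.mul_left
  apply summable_geometric_of_lt_one (by norm_num) (by norm_num)

lemma tsum_mu (ε : ℝ) : ∑' j, mu ε j = (ε * bet ε^3 / 16) * (4/3) := by
  unfold mu
  rw [tsum_mul_left, tsum_geometric_of_lt_one (by norm_num) (by norm_num)]
  norm_num

lemma psi'_le (ε K : ℝ) (hε : 0 < ε) (r : ℕ → ℝ) (x : ℝ) :
    psi' ε K r x ≤ ε * (psi ε K r x)^3 := by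
  have hψβ := psi_ge_bet ε K hε r x
  have hβ := bet_pos ε
  have hψpos := psi_pos ε K hε r x
  have hS : Summable (fun j => (ε/4) * (psi ε K r x)^2 * Tj ε K r j x + mu ε j) := by
    apply Summable.add _ (summable_mu ε)
    exact (summable_Tj ε K hε r x).mul_left _
  have h1 : psi' ε K r x ≤ ∑' j, ((ε/4) * (psi ε K r x)^2 * Tj ε K r j x + mu ε j) := by
    unfold psi'
    apply Summable.tsum_le_tsum (fun j => perterm ε K hε r x j) (summable_lamT ε K hε r x) hS
  have h2 : ∑' j, ((ε/4) * (psi ε K r x)^2 * Tj ε K r j x + mu ε j)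
      = (ε/4) * (psi ε K r x)^2 * (∑' j, Tj ε K r j x) + ∑' j, mu ε j := by
    rw [Summable.tsum_add ((summable_Tj ε K hε r x).mul_left _) (summable_mu ε), tsum_mul_left]
  have h3 : ∑' j, Tj ε K r j x = psi ε K r x - bet ε := by
    unfold psi; ring
  have h4 : ∑' j, mu ε j ≤ ε * (psi ε K r x)^3 / 12 := by
    rw [tsum_mu]
    have hcube : bet ε^3 ≤ (psi ε K r x)^3 := by
      apply pow_le_pow_left₀ hβ.le hψβ
    nlinarith
  rw [h2, h3] at h1
  have h5 : (ε/4) * (psi ε K r x)^2 * (psi ε K r x - bet ε) ≤ (ε/4) * (psi ε K r x)^3 := by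
    nlinarith [mul_nonneg (mul_nonneg hε.le (sq_nonneg (psi ε K r x))) hβ.le]
  have h6 : 0 ≤ ε * (psi ε K r x)^3 := by positivity
  nlinarith [h1, h4, h5, h6]

lemma psi'_nonneg (ε K : ℝ) (hε : 0 < ε) (r : ℕ → ℝ) (x : ℝ) : 0 ≤ psi' ε K r x := by
  unfold psi'
  apply tsum_nonneg
  intro j
  have := (lam_pos ε hε j).le
  have := (Tj_pos ε K hε r j x).le
  positivity
/-! ### Complex side -/

open Complex in
/-- terms of the antiderivative series -/
def Fc (ε K : ℝ) (r : ℕ → ℝ) (j : ℕ) (z : ℂ) : ℂ :=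
  ((Nj ε j / lam ε j : ℝ) : ℂ) *
    (Complex.exp ((lam ε j : ℂ) * (z - (bb ε K r j : ℂ))) -
     Complex.exp ((lam ε j : ℂ) * ((K : ℂ) - (bb ε K r j : ℂ))))

def Hc (ε K : ℝ) (r : ℕ → ℝ) (j : ℕ) (z : ℂ) : ℂ :=
  ((Nj ε j : ℝ) : ℂ) * Complex.exp ((lam ε j : ℂ) * (z - (bb ε K r j : ℂ)))

def H2c (ε K : ℝ) (r : ℕ → ℝ) (j : ℕ) (z : ℂ) : ℂ :=
  ((lam ε j * Nj ε j : ℝ) : ℂ) * Complex.exp ((lam ε j : ℂ) * (z - (bb ε K r j : ℂ)))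

def PhiC (ε K : ℝ) (r : ℕ → ℝ) (z : ℂ) : ℂ :=
  ((r 0 : ℝ) : ℂ) + ((bet ε : ℝ) : ℂ) * (z - (K : ℂ)) + ∑' j, Fc ε K r j z

def Phi1 (ε K : ℝ) (r : ℕ → ℝ) (z : ℂ) : ℂ :=
  ((bet ε : ℝ) : ℂ) + ∑' j, Hc ε K r j z

def Phi2 (ε K : ℝ) (r : ℕ → ℝ) (z : ℂ) : ℂ := ∑' j, H2c ε K r j z

lemma norm_cexp_term (l b : ℝ) (z : ℂ) :
    ‖Complex.exp ((l : ℂ) * (z - (b : ℂ)))‖ = Real.exp (l * (z.re - b)) := by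
  rw [Complex.norm_exp]
  congr 1
  simp [Complex.mul_re]

lemma norm_cexp_term_le (l b R : ℝ) (hl : 0 ≤ l) (z : ℂ) (hz : z ∈ Metric.ball (0:ℂ) R) :
    ‖Complex.exp ((l : ℂ) * (z - (b : ℂ)))‖ ≤ Real.exp (l * (R - b)) := by
  rw [norm_cexp_term]
  apply Real.exp_le_exp.mpr
  have h1 : z.re ≤ ‖z‖ := (Complex.re_le_norm z)
  have h2 : ‖z‖ < R := by simpa [Complex.dist_eq] using hz
  nlinarith

lemma hasDerivAt_cexp_term (l b : ℝ) (c : ℂ) (z : ℂ) :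
    HasDerivAt (fun w => c * Complex.exp ((l:ℂ) * (w - (b:ℂ))))
      (c * (l:ℂ) * Complex.exp ((l:ℂ) * (z - (b:ℂ)))) z := by
  have h1 : HasDerivAt (fun w : ℂ => (l:ℂ) * (w - (b:ℂ))) ((l:ℂ) * 1) z :=
    ((hasDerivAt_id z).sub_const ((b:ℂ))).const_mul (l:ℂ)
  have h2 := h1.cexp
  have h3 := h2.const_mul c
  exact h3.congr_deriv (by ring)

lemma summable_H_norm (ε K : ℝ) (hε : 0 < ε) (r : ℕ → ℝ) (R : ℝ) :
    Summable (fun j => (1 + lam ε j)^2 * Nj ε j * Real.exp (lam ε j * (R - bb ε K r j))) :=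
  summable_master ε K hε r R

lemma H_norm_le (ε K : ℝ) (hε : 0 < ε) (r : ℕ → ℝ) (R : ℝ) (j : ℕ) (z : ℂ)
    (hz : z ∈ Metric.ball (0:ℂ) R) :
    ‖Hc ε K r j z‖ ≤ (1 + lam ε j)^2 * Nj ε j * Real.exp (lam ε j * (R - bb ε K r j)) := by
  unfold Hc
  rw [norm_mul, Complex.norm_real]
  have h1 := norm_cexp_term_le (lam ε j) (bb ε K r j) R (lam_pos ε hε j).le z hz
  have hN := Nj_pos ε j
  have hsq := one_le_sq_one_add (lam ε j) (lam_pos ε hε j).le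
  have he : (0:ℝ) < Real.exp (lam ε j * (R - bb ε K r j)) := Real.exp_pos _
  have hnn : ‖Real.exp (lam ε j * (z.re - bb ε K r j))‖ = Real.exp (lam ε j * (z.re - bb ε K r j)) := by
    rw [Real.norm_eq_abs, abs_of_pos (Real.exp_pos _)]
  rw [Real.norm_eq_abs, abs_of_pos hN]
  calc Nj ε j * ‖Complex.exp ((lam ε j : ℂ) * (z - (bb ε K r j : ℂ)))‖
      ≤ Nj ε j * Real.exp (lam ε j * (R - bb ε K r j)) :=
        mul_le_mul_of_nonneg_left h1 hN.le
  _ ≤ (1 + lam ε j)^2 * (Nj ε j * Real.exp (lam ε j * (R - bb ε K r j))) :=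
        le_mul_of_one_le_left (by positivity) hsq
  _ = (1 + lam ε j)^2 * Nj ε j * Real.exp (lam ε j * (R - bb ε K r j)) := by ring

lemma H2_norm_le (ε K : ℝ) (hε : 0 < ε) (r : ℕ → ℝ) (R : ℝ) (j : ℕ) (z : ℂ)
    (hz : z ∈ Metric.ball (0:ℂ) R) :
    ‖H2c ε K r j z‖ ≤ (1 + lam ε j)^2 * Nj ε j * Real.exp (lam ε j * (R - bb ε K r j)) := by
  unfold H2c
  rw [norm_mul, Complex.norm_real]
  have h1 := norm_cexp_term_le (lam ε j) (bb ε K r j) R (lam_pos ε hε j).le z hz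
  have hN := Nj_pos ε j
  have hl := lam_pos ε hε j
  have hlsq : lam ε j ≤ (1 + lam ε j)^2 := by nlinarith
  rw [Real.norm_eq_abs, abs_of_pos (by positivity : 0 < lam ε j * Nj ε j)]
  have he : (0:ℝ) < Real.exp (lam ε j * (R - bb ε K r j)) := Real.exp_pos _
  calc lam ε j * Nj ε j * ‖Complex.exp ((lam ε j : ℂ) * (z - (bb ε K r j : ℂ)))‖
      ≤ lam ε j * Nj ε j * Real.exp (lam ε j * (R - bb ε K r j)) :=
        mul_le_mul_of_nonneg_left h1 (by positivity)
  _ = lam ε j * (Nj ε j * Real.exp (lam ε j * (R - bb ε K r j))) := by ring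
  _ ≤ (1 + lam ε j)^2 * (Nj ε j * Real.exp (lam ε j * (R - bb ε K r j))) :=
        mul_le_mul_of_nonneg_right hlsq (by positivity)
  _ = (1 + lam ε j)^2 * Nj ε j * Real.exp (lam ε j * (R - bb ε K r j)) := by ring

lemma F_norm_le (ε K : ℝ) (hε : 0 < ε) (r : ℕ → ℝ) (R : ℝ) (j : ℕ) (z : ℂ)
    (hz : z ∈ Metric.ball (0:ℂ) R) :
    ‖Fc ε K r j z‖ ≤ 2 * ((1 + lam ε j)^2 * Nj ε j *
      Real.exp (lam ε j * (max R K - bb ε K r j))) := by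
  unfold Fc
  rw [norm_mul, Complex.norm_real]
  have hN := Nj_pos ε j
  have hl := lam_pos ε hε j
  have hl9 := lam_ge_9 ε hε j
  set b := bb ε K r j
  have h1 : ‖Complex.exp ((lam ε j : ℂ) * (z - (b : ℂ))) -
      Complex.exp ((lam ε j : ℂ) * ((K:ℂ) - (b : ℂ)))‖
      ≤ Real.exp (lam ε j * (max R K - b)) + Real.exp (lam ε j * (max R K - b)) := by
    apply (norm_sub_le _ _).trans
    have ha : ‖Complex.exp ((lam ε j : ℂ) * (z - (b:ℂ)))‖ ≤ Real.exp (lam ε j * (max R K - b)) := by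
      have := norm_cexp_term_le (lam ε j) b (max R K) hl.le z
        (Metric.ball_subset_ball (le_max_left R K) hz)
      exact this
    have hb : ‖Complex.exp ((lam ε j : ℂ) * ((K:ℂ) - (b:ℂ)))‖ ≤ Real.exp (lam ε j * (max R K - b)) := by
      rw [show ((K:ℝ):ℂ) = ((K:ℝ):ℂ) from rfl, norm_cexp_term (lam ε j) b (K:ℂ)]
      apply Real.exp_le_exp.mpr
      have : ((K:ℝ):ℂ).re = K := by simp
      rw [this]
      nlinarith [le_max_right R K]
    linarith
  have h2 : |Nj ε j / lam ε j| ≤ Nj ε j := by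
    rw [abs_of_pos (by positivity)]
    rw [div_le_iff₀ hl]
    nlinarith
  have h3 : (0:ℝ) ≤ Real.exp (lam ε j * (max R K - b)) := (Real.exp_pos _).le
  have hsq := one_le_sq_one_add (lam ε j) hl.le
  have hnorm0 : (0:ℝ) ≤ ‖Complex.exp ((lam ε j : ℂ) * (z - (b:ℂ))) -
      Complex.exp ((lam ε j : ℂ) * ((K:ℂ) - (b:ℂ)))‖ := norm_nonneg _
  have habs0 : (0:ℝ) ≤ |Nj ε j / lam ε j| := abs_nonneg _
  rw [Real.norm_eq_abs]
  calc |Nj ε j / lam ε j| * ‖Complex.exp ((lam ε j : ℂ) * (z - (b:ℂ))) -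
      Complex.exp ((lam ε j : ℂ) * ((K:ℂ) - (b:ℂ)))‖
      ≤ Nj ε j * (Real.exp (lam ε j * (max R K - b)) + Real.exp (lam ε j * (max R K - b))) :=
        mul_le_mul h2 h1 hnorm0 hN.le
  _ = 2 * (1 * (Nj ε j * Real.exp (lam ε j * (max R K - b)))) := by ring
  _ ≤ 2 * ((1 + lam ε j)^2 * (Nj ε j * Real.exp (lam ε j * (max R K - b)))) := by
        have : (0:ℝ) ≤ Nj ε j * Real.exp (lam ε j * (max R K - b)) := by positivity
        nlinarith
  _ = 2 * ((1 + lam ε j)^2 * Nj ε j * Real.exp (lam ε j * (max R K - b))) := by ring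
lemma cast_NdivLam_mul (ε : ℝ) (hε : 0 < ε) (j : ℕ) :
    ((Nj ε j / lam ε j : ℝ) : ℂ) * ((lam ε j : ℝ) : ℂ) = ((Nj ε j : ℝ) : ℂ) := by
  have hl : (lam ε j) ≠ 0 := ne_of_gt (lam_pos ε hε j)
  push_cast
  rw [div_mul_cancel₀ _ (by exact_mod_cast hl : ((lam ε j : ℝ):ℂ) ≠ 0)]

lemma hasDerivAt_Hc (ε K : ℝ) (hε : 0 < ε) (r : ℕ → ℝ) (j : ℕ) (z : ℂ) :
    HasDerivAt (Hc ε K r j) (H2c ε K r j z) z := by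
  have h := hasDerivAt_cexp_term (lam ε j) (bb ε K r j) ((Nj ε j : ℝ) : ℂ) z
  unfold Hc H2c
  convert h using 1
  push_cast
  ring

lemma hasDerivAt_Fc (ε K : ℝ) (hε : 0 < ε) (r : ℕ → ℝ) (j : ℕ) (z : ℂ) :
    HasDerivAt (Fc ε K r j) (Hc ε K r j z) z := by
  have h := (hasDerivAt_cexp_term (lam ε j) (bb ε K r j) ((Nj ε j / lam ε j : ℝ) : ℂ) z).sub_const
    (((Nj ε j / lam ε j : ℝ) : ℂ) * Complex.exp ((lam ε j : ℂ) * ((K : ℂ) - (bb ε K r j : ℂ))))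
  have heq : (fun w => ((Nj ε j / lam ε j : ℝ) : ℂ) * Complex.exp ((lam ε j:ℂ) * (w - (bb ε K r j:ℂ)))
      - ((Nj ε j / lam ε j : ℝ) : ℂ) * Complex.exp ((lam ε j : ℂ) * ((K : ℂ) - (bb ε K r j : ℂ))))
      = Fc ε K r j := by
    funext w
    unfold Fc
    ring
  rw [heq] at h
  have hval : ((Nj ε j / lam ε j : ℝ) : ℂ) * ((lam ε j : ℝ):ℂ) *
      Complex.exp ((lam ε j:ℂ) * (z - (bb ε K r j:ℂ))) = Hc ε K r j z := by
    rw [cast_NdivLam_mul ε hε j]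
    rfl
  rw [hval] at h
  exact h

lemma differentiable_Hc (ε K : ℝ) (hε : 0 < ε) (r : ℕ → ℝ) (j : ℕ) :
    Differentiable ℂ (Hc ε K r j) := fun z => (hasDerivAt_Hc ε K hε r j z).differentiableAt

lemma differentiable_Fc (ε K : ℝ) (hε : 0 < ε) (r : ℕ → ℝ) (j : ℕ) :
    Differentiable ℂ (Fc ε K r j) := fun z => (hasDerivAt_Fc ε K hε r j z).differentiableAt

lemma mem_ball_self_R (z : ℂ) : z ∈ Metric.ball (0:ℂ) (‖z‖ + 1) := by
  simp only [Metric.mem_ball, Complex.dist_eq, sub_zero]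
  have : ‖z‖ = ‖z‖ := rfl
  rw [this]; linarith

lemma hasDerivAt_sumH (ε K : ℝ) (hε : 0 < ε) (r : ℕ → ℝ) (z : ℂ) :
    HasDerivAt (fun w => ∑' j, Hc ε K r j w) (∑' j, H2c ε K r j z) z := by
  set R := ‖z‖ + 1 with hR
  have hz : z ∈ Metric.ball (0:ℂ) R := mem_ball_self_R z
  have hu := summable_master ε K hε r R
  have hF_le : ∀ (j : ℕ) (w : ℂ), w ∈ Metric.ball (0:ℂ) R → ‖Hc ε K r j w‖ ≤
      (1 + lam ε j)^2 * Nj ε j * Real.exp (lam ε j * (R - bb ε K r j)) :=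
    fun j w hw => H_norm_le ε K hε r R j w hw
  have hdiff : ∀ j : ℕ, DifferentiableOn ℂ (Hc ε K r j) (Metric.ball (0:ℂ) R) :=
    fun j => (differentiable_Hc ε K hε r j).differentiableOn
  have hDOn := Complex.differentiableOn_tsum_of_summable_norm hu hdiff Metric.isOpen_ball hF_le
  have hDA : DifferentiableAt ℂ (fun w => ∑' j, Hc ε K r j w) z :=
    hDOn.differentiableAt (Metric.isOpen_ball.mem_nhds hz)
  have hHS := Complex.hasSum_deriv_of_summable_norm hu hdiff Metric.isOpen_ball hF_le hz
  have hderiv_j : (fun j => deriv (Hc ε K r j) z) = fun j => H2c ε K r j z := by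
    funext j
    exact (hasDerivAt_Hc ε K hε r j z).deriv
  rw [hderiv_j] at hHS
  have := hHS.tsum_eq
  rw [this]
  exact hDA.hasDerivAt

lemma hasDerivAt_sumF (ε K : ℝ) (hε : 0 < ε) (r : ℕ → ℝ) (z : ℂ) :
    HasDerivAt (fun w => ∑' j, Fc ε K r j w) (∑' j, Hc ε K r j z) z := by
  set R := ‖z‖ + 1 with hR
  have hz : z ∈ Metric.ball (0:ℂ) R := mem_ball_self_R z
  have hu : Summable (fun j => 2 * ((1 + lam ε j)^2 * Nj ε j *
      Real.exp (lam ε j * (max R K - bb ε K r j)))) :=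
    (summable_master ε K hε r (max R K)).mul_left 2
  have hF_le : ∀ (j : ℕ) (w : ℂ), w ∈ Metric.ball (0:ℂ) R → ‖Fc ε K r j w‖ ≤
      2 * ((1 + lam ε j)^2 * Nj ε j * Real.exp (lam ε j * (max R K - bb ε K r j))) :=
    fun j w hw => F_norm_le ε K hε r R j w hw
  have hdiff : ∀ j : ℕ, DifferentiableOn ℂ (Fc ε K r j) (Metric.ball (0:ℂ) R) :=
    fun j => (differentiable_Fc ε K hε r j).differentiableOn
  have hDOn := Complex.differentiableOn_tsum_of_summable_norm hu hdiff Metric.isOpen_ball hF_le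
  have hDA : DifferentiableAt ℂ (fun w => ∑' j, Fc ε K r j w) z :=
    hDOn.differentiableAt (Metric.isOpen_ball.mem_nhds hz)
  have hHS := Complex.hasSum_deriv_of_summable_norm hu hdiff Metric.isOpen_ball hF_le hz
  have hderiv_j : (fun j => deriv (Fc ε K r j) z) = fun j => Hc ε K r j z := by
    funext j
    exact (hasDerivAt_Fc ε K hε r j z).deriv
  rw [hderiv_j] at hHS
  have := hHS.tsum_eq
  rw [this]
  exact hDA.hasDerivAt

lemma hasDerivAt_PhiC (ε K : ℝ) (hε : 0 < ε) (r : ℕ → ℝ) (z : ℂ) :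
    HasDerivAt (PhiC ε K r) (Phi1 ε K r z) z := by
  have h1 : HasDerivAt (fun w : ℂ => ((r 0 : ℝ):ℂ) + ((bet ε : ℝ):ℂ) * (w - (K:ℂ)))
      (((bet ε : ℝ):ℂ)) z := by
    have := (((hasDerivAt_id z).sub_const ((K:ℂ))).const_mul (((bet ε : ℝ)):ℂ)).const_add
      (((r 0 : ℝ)):ℂ)
    simpa using this
  have h2 := hasDerivAt_sumF ε K hε r z
  have h3 := h1.add h2
  unfold PhiC Phi1
  exact h3
lemma hasDerivAt_Phi1 (ε K : ℝ) (hε : 0 < ε) (r : ℕ → ℝ) (z : ℂ) :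
    HasDerivAt (Phi1 ε K r) (Phi2 ε K r z) z := by
  have h := (hasDerivAt_sumH ε K hε r z).const_add (((bet ε : ℝ)):ℂ)
  unfold Phi1 Phi2
  exact h

lemma differentiable_PhiC (ε K : ℝ) (hε : 0 < ε) (r : ℕ → ℝ) :
    Differentiable ℂ (PhiC ε K r) :=
  fun z => (hasDerivAt_PhiC ε K hε r z).differentiableAt

/-- the real function φ -/
def phi (ε K : ℝ) (r : ℕ → ℝ) (x : ℝ) : ℝ := (PhiC ε K r (x : ℂ)).re

lemma contDiff_phi (ε K : ℝ) (hε : 0 < ε) (r : ℕ → ℝ) :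
    ContDiff ℝ (⊤ : ℕ∞) (phi ε K r) := by
  have hA : AnalyticOnNhd ℂ (PhiC ε K r) Set.univ :=
    Complex.analyticOnNhd_univ_iff_differentiable.mpr (differentiable_PhiC ε K hε r)
  have hAR : AnalyticOnNhd ℝ (PhiC ε K r) Set.univ := hA.restrictScalars
  have hof : AnalyticOnNhd ℝ (fun x : ℝ => (x : ℂ)) Set.univ := by
    have := Complex.ofRealCLM.analyticOnNhd (Set.univ : Set ℝ)
    exact this
  have hcomp : AnalyticOnNhd ℝ (fun x : ℝ => PhiC ε K r (x:ℂ)) Set.univ :=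
    hAR.comp hof (Set.mapsTo_univ _ _)
  have hre : AnalyticOnNhd ℝ (fun x : ℝ => (PhiC ε K r (x:ℂ)).re) Set.univ :=
    (Complex.reCLM.analyticOnNhd (Set.univ : Set ℂ)).comp hcomp (Set.mapsTo_univ _ _)
  exact hre.contDiff

lemma hasDerivAt_phi (ε K : ℝ) (hε : 0 < ε) (r : ℕ → ℝ) (x : ℝ) :
    HasDerivAt (phi ε K r) ((Phi1 ε K r (x:ℂ)).re) x :=
  (hasDerivAt_PhiC ε K hε r (x:ℂ)).real_of_complex

lemma deriv_phi (ε K : ℝ) (hε : 0 < ε) (r : ℕ → ℝ) :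
    deriv (phi ε K r) = fun x : ℝ => (Phi1 ε K r (x:ℂ)).re := by
  funext x
  exact (hasDerivAt_phi ε K hε r x).deriv

lemma hasDerivAt_dphi (ε K : ℝ) (hε : 0 < ε) (r : ℕ → ℝ) (x : ℝ) :
    HasDerivAt (fun x : ℝ => (Phi1 ε K r (x:ℂ)).re) ((Phi2 ε K r (x:ℂ)).re) x :=
  (hasDerivAt_Phi1 ε K hε r (x:ℂ)).real_of_complex

/-! ### real-complex bridging -/

lemma Phi1_re (ε K : ℝ) (hε : 0 < ε) (r : ℕ → ℝ) (x : ℝ) :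
    (Phi1 ε K r (x:ℂ)).re = psi ε K r x := by
  unfold Phi1 psi
  have hterm : (fun j => Hc ε K r j (x:ℂ)) = fun j => ((Tj ε K r j x : ℝ) : ℂ) := by
    funext j
    unfold Hc Tj
    push_cast
    ring
  rw [hterm, ← Complex.ofReal_tsum]
  simp

lemma Phi2_re (ε K : ℝ) (hε : 0 < ε) (r : ℕ → ℝ) (x : ℝ) :
    (Phi2 ε K r (x:ℂ)).re = psi' ε K r x := by
  unfold Phi2 psi'
  have hterm : (fun j => H2c ε K r j (x:ℂ)) = fun j => ((lam ε j * Tj ε K r j x : ℝ) : ℂ) := by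
    funext j
    unfold H2c Tj
    push_cast
    ring
  rw [hterm, ← Complex.ofReal_tsum]
  simp

lemma PhiC_re (ε K : ℝ) (hε : 0 < ε) (r : ℕ → ℝ) (x : ℝ) :
    phi ε K r x = r 0 + bet ε * (x - K) +
      ∑' j, (Nj ε j / lam ε j) *
        (Real.exp (lam ε j * (x - bb ε K r j)) - Real.exp (lam ε j * (K - bb ε K r j))) := by
  unfold phi PhiC
  have hterm : (fun j => Fc ε K r j (x:ℂ)) = fun j =>
      (((Nj ε j / lam ε j) * (Real.exp (lam ε j * (x - bb ε K r j)) -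
        Real.exp (lam ε j * (K - bb ε K r j))) : ℝ) : ℂ) := by
    funext j
    unfold Fc
    push_cast
    ring
  rw [hterm, ← Complex.ofReal_tsum]
  simp
lemma phi_at_K (ε K : ℝ) (hε : 0 < ε) (r : ℕ → ℝ) : phi ε K r K = r 0 := by
  rw [PhiC_re ε K hε r K]
  have h : (fun j => (Nj ε j / lam ε j) *
      (Real.exp (lam ε j * (K - bb ε K r j)) - Real.exp (lam ε j * (K - bb ε K r j))))
      = fun _ => (0:ℝ) := by
    funext j; ring
  rw [h, tsum_zero]
  ring

lemma Freal_nonneg (ε K : ℝ) (hε : 0 < ε) (r : ℕ → ℝ) (x : ℝ) (hx : K ≤ x) (j : ℕ) :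
    0 ≤ (Nj ε j / lam ε j) *
      (Real.exp (lam ε j * (x - bb ε K r j)) - Real.exp (lam ε j * (K - bb ε K r j))) := by
  have h1 : Real.exp (lam ε j * (K - bb ε K r j)) ≤ Real.exp (lam ε j * (x - bb ε K r j)) := by
    apply Real.exp_le_exp.mpr
    have := (lam_pos ε hε j).le
    nlinarith
  have := Nj_pos ε j
  have := lam_pos ε hε j
  have h2 : (0:ℝ) ≤ Nj ε j / lam ε j := by positivity
  nlinarith

lemma summable_Freal (ε K : ℝ) (hε : 0 < ε) (r : ℕ → ℝ) (x : ℝ) (hx : K ≤ x) :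
    Summable (fun j => (Nj ε j / lam ε j) *
      (Real.exp (lam ε j * (x - bb ε K r j)) - Real.exp (lam ε j * (K - bb ε K r j)))) := by
  apply summable_of_le_master ε K hε r x
  · exact Freal_nonneg ε K hε r x hx
  · intro j
    have hN := Nj_pos ε j
    have hl := lam_pos ε hε j
    have hl9 := lam_ge_9 ε hε j
    have h2 : Nj ε j / lam ε j ≤ Nj ε j := by
      rw [div_le_iff₀ hl]; nlinarith
    have hE2 : (0:ℝ) < Real.exp (lam ε j * (K - bb ε K r j)) := Real.exp_pos _
    have hE1 : (0:ℝ) < Real.exp (lam ε j * (x - bb ε K r j)) := Real.exp_pos _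
    have hsq := one_le_sq_one_add (lam ε j) hl.le
    have hstep : (Nj ε j / lam ε j) *
        (Real.exp (lam ε j * (x - bb ε K r j)) - Real.exp (lam ε j * (K - bb ε K r j)))
        ≤ Nj ε j * Real.exp (lam ε j * (x - bb ε K r j)) := by
      have hd : (0:ℝ) ≤ Nj ε j / lam ε j := by positivity
      nlinarith
    calc (Nj ε j / lam ε j) *
        (Real.exp (lam ε j * (x - bb ε K r j)) - Real.exp (lam ε j * (K - bb ε K r j)))
        ≤ Nj ε j * Real.exp (lam ε j * (x - bb ε K r j)) := hstep
    _ = 1 * (Nj ε j * Real.exp (lam ε j * (x - bb ε K r j))) := by ring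
    _ ≤ (1 + lam ε j)^2 * (Nj ε j * Real.exp (lam ε j * (x - bb ε K r j))) := by
        apply mul_le_mul_of_nonneg_right hsq (by positivity)
    _ = (1 + lam ε j)^2 * Nj ε j * Real.exp (lam ε j * (x - bb ε K r j)) := by ring

lemma exp_half_ge (l : ℝ) (hl : 9 ≤ l) : 1 + l ≤ Real.exp (l/2) := by
  have h1 : 1 + l/4 ≤ Real.exp (l/4) := by linarith [Real.add_one_le_exp (l/4)]
  have h2 : (1 + l/4)^2 ≤ (Real.exp (l/4))^2 := by
    apply pow_le_pow_left₀ (by linarith) h1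
  have h3 : (Real.exp (l/4))^2 = Real.exp (l/2) := by
    rw [← Real.exp_nat_mul]
    congr 1; push_cast; ring
  nlinarith

lemma target_ge (ε K : ℝ) (hε : 0 < ε) (r : ℕ → ℝ) (n : ℕ) (hn : 1 ≤ n) (hr0 : 0 < r 0) :
    r n ≤ phi ε K r (K + n) := by
  have hx : K ≤ K + (n:ℝ) := by
    have : (0:ℝ) ≤ (n:ℝ) := Nat.cast_nonneg n
    linarith
  rw [PhiC_re ε K hε r (K + n)]
  set j := Q ε r n with hj
  have hl := lam_pos ε hε j
  have hl9 := lam_ge_9 ε hε j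
  have hN := Nj_pos ε j
  -- the single term bound
  have hb_le : bb ε K r j ≤ K + n - 1/2 := bb_deadline ε K hε r n hn
  have hb_ge : K ≤ bb ε K r j := bb_ge_K ε K hε r j
  have hE1 : Real.exp (lam ε j/2) ≤ Real.exp (lam ε j * ((K + n) - bb ε K r j)) := by
    apply Real.exp_le_exp.mpr
    have h1 : (1:ℝ)/2 ≤ (K + n) - bb ε K r j := by linarith
    nlinarith
  have hE2 : Real.exp (lam ε j * (K - bb ε K r j)) ≤ 1 := by
    rw [show (1:ℝ) = Real.exp 0 by rw [Real.exp_zero]]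
    apply Real.exp_le_exp.mpr
    nlinarith
  have hterm : Nj ε j ≤ (Nj ε j / lam ε j) *
      (Real.exp (lam ε j * ((K + n) - bb ε K r j)) - Real.exp (lam ε j * (K - bb ε K r j))) := by
    have hgap : lam ε j ≤ Real.exp (lam ε j * ((K + n) - bb ε K r j)) -
        Real.exp (lam ε j * (K - bb ε K r j)) := by
      have := exp_half_ge (lam ε j) hl9
      linarith
    calc Nj ε j = (Nj ε j / lam ε j) * lam ε j := by field_simp
    _ ≤ _ := by
        apply mul_le_mul_of_nonneg_left hgap (by positivity)
  have htsum : (Nj ε j / lam ε j) *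
      (Real.exp (lam ε j * ((K + n) - bb ε K r j)) - Real.exp (lam ε j * (K - bb ε K r j)))
      ≤ ∑' i, (Nj ε i / lam ε i) *
        (Real.exp (lam ε i * ((K + n) - bb ε K r i)) - Real.exp (lam ε i * (K - bb ε K r i))) :=
    Summable.le_tsum (summable_Freal ε K hε r (K + n) hx) j
      (fun i _ => Freal_nonneg ε K hε r (K + n) hx i)
  have hrn : |r n| ≤ Nj ε j := abs_r_le_N_Q ε r n
  have hbet : 0 ≤ bet ε * ((K + n) - K) := by
    have h1 : (0:ℝ) ≤ (n:ℝ) := Nat.cast_nonneg n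
    have := bet_pos ε
    nlinarith
  have habs : r n ≤ |r n| := le_abs_self _
  linarith

lemma psi'_abs_div_le (ε K : ℝ) (hε : 0 < ε) (r : ℕ → ℝ) (x : ℝ) :
    |psi' ε K r x| / (1 + (psi ε K r x)^2) ^ (3/2 : ℝ) ≤ ε := by
  set p := psi ε K r x with hp
  have hψpos : 0 < p := psi_pos ε K hε r x
  have hd' := psi'_nonneg ε K hε r x
  have hden : (0:ℝ) < (1 + p^2) ^ (3/2 : ℝ) := by
    apply Real.rpow_pos_of_pos
    positivity
  rw [abs_of_nonneg hd', div_le_iff₀ hden]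
  have hcube : p^3 ≤ (1 + p^2) ^ (3/2 : ℝ) := by
    have h2 : ((p^2:ℝ)) ^ (3/2:ℝ) ≤ (1 + p^2) ^ (3/2:ℝ) :=
      Real.rpow_le_rpow (by positivity) (by linarith) (by norm_num)
    have h3 : ((p^2:ℝ)) ^ (3/2:ℝ) = p^3 := by
      rw [← Real.rpow_natCast p 2, ← Real.rpow_mul hψpos.le]
      norm_num
    linarith
  have h1 := psi'_le ε K hε r x
  calc psi' ε K r x ≤ ε * p^3 := h1
  _ ≤ ε * (1 + p^2) ^ (3/2:ℝ) := by
      apply mul_le_mul_of_nonneg_left hcube hε.le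
end Stmt11Aux

open Stmt11Aux in
/-- For any `ε > 0`, `K > 0`, and `r : ℕ → ℝ` with
`r 0 ≥ K² ε`, there is a smooth function `φ`, strictly increasing on
`[K, ∞)`, whose graph has Euclidean curvature at most `ε` there, and with
`φ (K + n) ≥ r n` for all `n`. -/
theorem stmt_11 (ε K : ℝ) (hε : 0 < ε) (hK : 0 < K) (r : ℕ → ℝ)
    (hr0 : K ^ 2 * ε ≤ r 0) :
    ∃ φ : ℝ → ℝ, ContDiff ℝ (⊤ : ℕ∞) φ ∧ StrictMonoOn φ (Set.Ici K) ∧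
      (∀ x, K ≤ x →
        |deriv (deriv φ) x| / (1 + (deriv φ x) ^ 2) ^ (3/2 : ℝ) ≤ ε) ∧
      (∀ n : ℕ, r n ≤ φ (K + n)) := by
  have hr0pos : (0:ℝ) < r 0 := lt_of_lt_of_le (by positivity) hr0
  have e1 : ∀ y : ℝ, deriv (phi ε K r) y = psi ε K r y := by
    intro y
    rw [deriv_phi ε K hε r]
    exact Phi1_re ε K hε r y
  have e2 : ∀ y : ℝ, deriv (deriv (phi ε K r)) y = psi' ε K r y := by
    intro y
    rw [deriv_phi ε K hε r, (hasDerivAt_dphi ε K hε r y).deriv]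
    exact Phi2_re ε K hε r y
  refine ⟨phi ε K r, contDiff_phi ε K hε r, ?_, ?_, ?_⟩
  · apply strictMonoOn_of_deriv_pos (convex_Ici K)
    · exact ((contDiff_phi ε K hε r).continuous).continuousOn
    · intro x _
      rw [e1 x]
      exact psi_pos ε K hε r x
  · intro x _
    rw [e1 x, e2 x]
    exact psi'_abs_div_le ε K hε r x
  · intro n
    cases n with
    | zero =>
      have : K + ((0:ℕ):ℝ) = K := by norm_num
      rw [this, phi_at_K ε K hε r]
    | succ m =>
      exact target_ge ε K hε r (m+1) (by omega) hr0pos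
end
end

section
/- Let ε > 0 and let f : ℝ → ℝ be a smooth even function whose graph has Euclidean curvature ≤ ε everywhere, with f(K + n) ≥ r(n) for all n ∈ ℕ, where r eventually dominates every total computable function. Consider the foliation of ℝ² whose leaves are the vertical translates {(x, f(x) + c) : x ∈ ℝ}. Then its distortion function D(t) = sup{ d_leaf(p, q) : p, q on a common leaf, |p − q| = t } satisfies: D is not bounded above by any total computable function (of ⌊t⌋). -/
/-- Let `f` be a smooth even function with graph curvature `≤ ε`
and `f (K + n) ≥ r n` where `r : ℕ → ℕ` eventually dominates every total
computable function. For the foliation of ℝ² by vertical translates of the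
graph of `f`, any distortion function `D` (dominating the leafwise arc length
between points at given Euclidean distance) is not bounded above by any total
computable function of `⌊t⌋`. -/
theorem stmt_12 (ε K : ℝ) (hε : 0 < ε) (hK : 0 < K)
    (f : ℝ → ℝ) (hf : ContDiff ℝ (⊤ : ℕ∞) f) (heven : ∀ x, f (-x) = f x)
    (hcurv : ∀ x,
      |deriv (deriv f) x| / (1 + (deriv f x) ^ 2) ^ (3/2 : ℝ) ≤ ε)
    (r : ℕ → ℕ)
    (hr : ∀ g : ℕ → ℕ, Computable g → ∃ N, ∀ n ≥ N, g n ≤ r n)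
    (hfr : ∀ n : ℕ, (r n : ℝ) ≤ f (K + n))
    (D : ℝ → ℝ)
    (hD : ∀ x₁ x₂ : ℝ, x₁ ≤ x₂ →
      (∫ x in x₁..x₂, Real.sqrt (1 + (deriv f x) ^ 2)) ≤
        D (Real.sqrt ((x₂ - x₁) ^ 2 + (f x₂ - f x₁) ^ 2))) :
    ¬ ∃ g : ℕ → ℕ, Computable g ∧ ∀ t : ℝ, 0 ≤ t → D t ≤ (g ⌊t⌋₊ : ℝ) := by
  rintro ⟨g, hg, hgD⟩
  have hf' : Continuous (deriv f) := hf.continuous_deriv (by simp)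
  have hfd : Differentiable ℝ f := hf.differentiable (by simp)
  have hsqrtcont : Continuous (fun x => Real.sqrt (1 + (deriv f x) ^ 2)) := by
    continuity
  set c := ⌊2 * K⌋₊ with hc
  set C := ⌈2 * f 0⌉₊ with hC
  have key : ∀ n : ℕ, 2 * (r n : ℝ) - 2 * f 0 ≤ (g (c + 2 * n) : ℝ) := by
    intro n
    set a : ℝ := K + n with ha
    have ha0 : 0 < a := by positivity
    have hle : ∀ x : ℝ, deriv f x ≤ Real.sqrt (1 + (deriv f x) ^ 2) := by
      intro x
      calc deriv f x ≤ |deriv f x| := le_abs_self _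
        _ = Real.sqrt ((deriv f x) ^ 2) := (Real.sqrt_sq_eq_abs _).symm
        _ ≤ _ := Real.sqrt_le_sqrt (by nlinarith)
    have hle' : ∀ x : ℝ, -deriv f x ≤ Real.sqrt (1 + (deriv f x) ^ 2) := by
      intro x
      calc -deriv f x ≤ |deriv f x| := neg_le_abs _
        _ = Real.sqrt ((deriv f x) ^ 2) := (Real.sqrt_sq_eq_abs _).symm
        _ ≤ _ := Real.sqrt_le_sqrt (by nlinarith)
    have hI1 : f a - f 0 ≤ ∫ x in (0:ℝ)..a, Real.sqrt (1 + (deriv f x) ^ 2) := by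
      have hftc : (∫ x in (0:ℝ)..a, deriv f x) = f a - f 0 :=
        intervalIntegral.integral_deriv_eq_sub (fun x _ => hfd x)
          (hf'.intervalIntegrable _ _)
      rw [← hftc]
      exact intervalIntegral.integral_mono_on ha0.le (hf'.intervalIntegrable _ _)
        (hsqrtcont.intervalIntegrable _ _) (fun x _ => hle x)
    have hI2 : f a - f 0 ≤ ∫ x in (-a)..(0:ℝ), Real.sqrt (1 + (deriv f x) ^ 2) := by
      have hftc : (∫ x in (-a)..(0:ℝ), -deriv f x) = f a - f 0 := by
        rw [intervalIntegral.integral_neg,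
          intervalIntegral.integral_deriv_eq_sub (fun x _ => hfd x)
            (hf'.intervalIntegrable _ _), heven a]
        ring
      rw [← hftc]
      exact intervalIntegral.integral_mono_on (by linarith)
        (hf'.neg.intervalIntegrable _ _)
        (hsqrtcont.intervalIntegrable _ _) (fun x _ => hle' x)
    have hsum : (∫ x in (-a)..(0:ℝ), Real.sqrt (1 + (deriv f x) ^ 2))
          + (∫ x in (0:ℝ)..a, Real.sqrt (1 + (deriv f x) ^ 2))
        = ∫ x in (-a)..a, Real.sqrt (1 + (deriv f x) ^ 2) :=
      intervalIntegral.integral_add_adjacent_intervals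
        (hsqrtcont.intervalIntegrable _ _) (hsqrtcont.intervalIntegrable _ _)
    have hDlow : 2 * f a - 2 * f 0 ≤ D (2 * a) := by
      have := hD (-a) a (by linarith)
      have hs : Real.sqrt ((a - -a) ^ 2 + (f a - f (-a)) ^ 2) = 2 * a := by
        rw [heven a]
        have h2 : (a - -a) ^ 2 + (f a - f a) ^ 2 = (2 * a) ^ 2 := by ring
        rw [h2, Real.sqrt_sq (by linarith)]
      rw [hs] at this
      linarith
    have hfloor : ⌊2 * a⌋₊ = c + 2 * n := by
      have h2a : 2 * a = 2 * K + ((2 * n : ℕ) : ℝ) := by push_cast; ring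
      rw [h2a, Nat.floor_add_natCast (by linarith)]
    have hgb : D (2 * a) ≤ (g (c + 2 * n) : ℝ) := by
      have := hgD (2 * a) (by linarith)
      rwa [hfloor] at this
    have hra : (r n : ℝ) ≤ f a := hfr n
    linarith
  -- computability of the comparison function
  have hinner : Primrec (fun n : ℕ => c + 2 * n) :=
    Primrec.nat_add.comp (Primrec.const c)
      (Primrec.nat_mul.comp (Primrec.const 2) Primrec.id)
  have houter : Primrec (fun m : ℕ => 2 * (m + C) + 1) :=
    Primrec.nat_add.comp
      (Primrec.nat_mul.comp (Primrec.const 2)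
        (Primrec.nat_add.comp Primrec.id (Primrec.const C)))
      (Primrec.const 1)
  have hh : Computable (fun n : ℕ => 2 * (g (c + 2 * n) + C) + 1) :=
    houter.to_comp.comp (hg.comp hinner.to_comp)
  obtain ⟨N, hN⟩ := hr _ hh
  have h1 : 2 * (g (c + 2 * N) + C) + 1 ≤ r N := hN N le_rfl
  have h2 : 2 * r N ≤ g (c + 2 * N) + C := by
    have hCle : 2 * f 0 ≤ (C : ℝ) := Nat.le_ceil _
    have := key N
    have hreal : (2 * r N : ℝ) ≤ ((g (c + 2 * N) + C : ℕ) : ℝ) := by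
      push_cast
      linarith
    exact_mod_cast hreal
  omega
end
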